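/- Let S ⊆ ℝ^N be compact and convex, let d ∈ S, and suppose there exists s ∈ S with d_n < s_n for every coordinate n. Then the Nash product function s ↦ ∏_{n=1}^N (s_n − d_n) attains its maximum over the set {s ∈ S : d ≤ s coordinatewise} at exactly one point. -/

import Mathlib

/-!
The set `K = {s ∈ S | d ≤ s}` is compact, so the continuous Nash product attains its maximum on
it, and the maximum is positive because of the strictly dominating point. For uniqueness, if
`x ≠ y` both attain the maximum `M > 0`, then all their coordinates exceed `d`, and coordinatewise
AM-GM gives `M ^ 2 = f x * f y < f (midpoint x y) ^ 2 ≤ M ^ 2`, using convexity of `K`.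
-/

open Finset

lemma mul_sub_lt_sq_midpoint_sub {a b : ℝ} (c : ℝ) (hab : a ≠ b) :
    (a - c) * (b - c) < (midpoint ℝ a b - c) ^ 2 := by
  have : 0 < (a - b) ^ 2 := by
    have := sub_ne_zero.mpr hab
    positivity
  rw [midpoint_eq_smul_add, smul_eq_mul]
  norm_num
  nlinarith

section NashProduct

variable {ι : Type*} [Fintype ι] {d x y : ι → ℝ}

def nashProduct (d s : ι → ℝ) : ℝ := ∏ n, (s n - d n)

lemma continuous_nashProduct (d : ι → ℝ) : Continuous (nashProduct d) := by
  unfold nashProduct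
  fun_prop

lemma nashProduct_pos (h : ∀ n, d n < x n) : 0 < nashProduct d x :=
  prod_pos fun n _ => sub_pos.mpr (h n)

lemma nashProduct_nonneg (h : d ≤ x) : 0 ≤ nashProduct d x :=
  prod_nonneg fun n _ => sub_nonneg.mpr (h n)

lemma lt_of_nashProduct_pos (h : d ≤ x) (hpos : 0 < nashProduct d x) (n : ι) : d n < x n := by
  refine (h n).lt_of_ne fun hn => hpos.ne' ?_
  exact prod_eq_zero (mem_univ n) (sub_eq_zero.mpr hn.symm)

lemma nashProduct_mul_lt_sq_midpoint (hx : ∀ n, d n < x n) (hy : ∀ n, d n < y n) (hxy : x ≠ y) :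
    nashProduct d x * nashProduct d y < nashProduct d (midpoint ℝ x y) ^ 2 := by
  obtain ⟨n₀, hn₀⟩ := Function.ne_iff.mp hxy
  simp only [nashProduct, ← prod_mul_distrib, ← prod_pow, pi_midpoint_apply]
  refine prod_lt_prod (fun n _ => mul_pos (sub_pos.mpr (hx n)) (sub_pos.mpr (hy n)))
    (fun n _ => ?_) ⟨n₀, mem_univ n₀, mul_sub_lt_sq_midpoint_sub _ hn₀⟩
  rcases eq_or_ne (x n) (y n) with h | h
  · rw [h, midpoint_self, sq]
  · exact (mul_sub_lt_sq_midpoint_sub _ h).le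

lemma eq_of_isMaxOn_nashProduct {K : Set (ι → ℝ)} (hK : Convex ℝ K) (hKd : ∀ s ∈ K, d ≤ s)
    (hxK : x ∈ K) (hyK : y ∈ K) (hxmax : IsMaxOn (nashProduct d) K x)
    (hymax : IsMaxOn (nashProduct d) K y) (hpos : 0 < nashProduct d x) : x = y := by
  by_contra hxy
  have hyx : nashProduct d y = nashProduct d x := le_antisymm (hxmax hyK) (hymax hxK)
  have hzK : midpoint ℝ x y ∈ K := hK.midpoint_mem hxK hyK
  have hlt := nashProduct_mul_lt_sq_midpoint (lt_of_nashProduct_pos (hKd x hxK) hpos)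
    (lt_of_nashProduct_pos (hKd y hyK) (hyx ▸ hpos)) hxy
  have hz_le : nashProduct d (midpoint ℝ x y) ≤ nashProduct d x := hxmax hzK
  have hz_nonneg := nashProduct_nonneg (hKd _ hzK)
  rw [hyx] at hlt
  nlinarith

end NashProduct

theorem nash_product_unique_maximizer_general (N : ℕ) (S : Set (Fin N → ℝ)) (d : Fin N → ℝ)
    (hcomp : IsCompact S) (hconv : Convex ℝ S)
    (hdom : ∃ s ∈ S, ∀ n, d n < s n) :
    ∃! s : Fin N → ℝ, s ∈ {s ∈ S | ∀ n, d n ≤ s n} ∧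
      IsMaxOn (fun s : Fin N → ℝ => ∏ n, (s n - d n)) {s ∈ S | ∀ n, d n ≤ s n} s := by
  obtain ⟨s₀, hs₀S, hs₀⟩ := hdom
  have hs₀K : s₀ ∈ {s ∈ S | ∀ n, d n ≤ s n} := ⟨hs₀S, fun n => (hs₀ n).le⟩
  obtain ⟨x, hxK, hxmax⟩ := (hcomp.inter_right isClosed_Ici).exists_isMaxOn ⟨s₀, hs₀K⟩
    (continuous_nashProduct d).continuousOn
  have hpos : 0 < nashProduct d x := (nashProduct_pos hs₀).trans_le (hxmax hs₀K)
  refine ⟨x, ⟨hxK, hxmax⟩, fun y ⟨hyK, hymax⟩ => ?_⟩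
  exact (eq_of_isMaxOn_nashProduct (hconv.inter (convex_Ici d)) (fun s hs => hs.2) hxK hyK
    hxmax hymax hpos).symm

/-- For a compact convex feasible set `S ⊆ ℝ^N` with disagreement point `d ∈ S`
that is strictly dominated by some feasible point, the Nash product
`s ↦ ∏ n (s n - d n)` attains its maximum over `{s ∈ S | d ≤ s}` at exactly
one point. -/
theorem nash_product_unique_maximizer (N : ℕ) (S : Set (Fin N → ℝ)) (d : Fin N → ℝ)
    (hcomp : IsCompact S) (hconv : Convex ℝ S) (hd : d ∈ S)
    (hdom : ∃ s ∈ S, ∀ n, d n < s n) :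
    ∃! s : Fin N → ℝ, s ∈ {s ∈ S | ∀ n, d n ≤ s n} ∧
      IsMaxOn (fun s : Fin N → ℝ => ∏ n, (s n - d n)) {s ∈ S | ∀ n, d n ≤ s n} s :=
  nash_product_unique_maximizer_general N S d hcomp hconv hdom
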